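/- arXiv:1205.1342 — 9 statements merged into one kernel-verified Lean document; each statement's English description precedes it below -/
import Mathlib

section
/- If λ ∈ ℂ and a nonzero z ∈ ℂⁿ satisfy Ψ z^{m-1} = λ z̄, conj(Ψ) z̄^{m-1} = λ z and z̄ᵀ z = 1, where Ψ is an m-order n-dimensional symmetric complex tensor, then λ is a real number. -/
open Finset

noncomputable section

/-- Contraction `T z^m` of an `(m+1)`-order tensor with entries in `ℂ`. -/
def tapplyC {m : ℕ} {ι : Type} [Fintype ι] (T : (Fin (m + 1) → ι) → ℂ)
    (z : ι → ℂ) : ι → ℂ :=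
  fun i => ∑ f : Fin m → ι, T (Fin.cons i f) * ∏ j, z (f j)

/-- Contraction `T x^m` of an `(m+1)`-order tensor with entries in `ℝ`. -/
def tapplyR {m : ℕ} {ι : Type} [Fintype ι] (T : (Fin (m + 1) → ι) → ℝ)
    (x : ι → ℝ) : ι → ℝ :=
  fun i => ∑ f : Fin m → ι, T (Fin.cons i f) * ∏ j, x (f j)

/-- A tensor is symmetric if its entries are invariant under index permutations. -/
def SymmT {m : ℕ} {ι R : Type} (T : (Fin m → ι) → R) : Prop :=
  ∀ (σ : Equiv.Perm (Fin m)) (f : Fin m → ι), T (f ∘ σ) = T f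

/-- `lam` is a Q-eigenvalue of the complex tensor `T` with Q-eigenvector `z`:
`T z^{m} = lam * conj z` and `z̄ᵀ z = 1`. -/
def IsQEig {m : ℕ} {ι : Type} [Fintype ι] (T : (Fin (m + 1) → ι) → ℂ)
    (lam : ℝ) (z : ι → ℂ) : Prop :=
  tapplyC T z = (fun i => (lam : ℂ) * (starRingEnd ℂ) (z i)) ∧
    ∑ i, (starRingEnd ℂ) (z i) * z i = 1

/-- `lam` is a Z-eigenvalue of the real tensor `T` with Z-eigenvector `x`. -/
def IsZEig {m : ℕ} {ι : Type} [Fintype ι] (T : (Fin (m + 1) → ι) → ℝ)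
    (lam : ℝ) (x : ι → ℝ) : Prop :=
  tapplyR T x = (fun i => lam * x i) ∧ ∑ i, x i ^ 2 = 1

/-- Complexification of a real tensor. -/
def toC {m : ℕ} {ι : Type} (T : (Fin (m + 1) → ι) → ℝ) :
    (Fin (m + 1) → ι) → ℂ := fun f => ((T f : ℝ) : ℂ)

/-- The entanglement eigenvalue of a real tensor: largest Q-eigenvalue. -/
def QmaxR {m : ℕ} {ι : Type} [Fintype ι] (T : (Fin (m + 1) → ι) → ℝ) : ℝ :=
  sSup {lam : ℝ | ∃ z : ι → ℂ, IsQEig (toC T) lam z}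

/-- The Z-spectral radius of a real tensor: largest `|λ|` over Z-eigenvalues. -/
def Zrad {m : ℕ} {ι : Type} [Fintype ι] (T : (Fin (m + 1) → ι) → ℝ) : ℝ :=
  sSup {r : ℝ | ∃ (lam : ℝ) (x : ι → ℝ), IsZEig T lam x ∧ r = |lam|}

/-- Frobenius norm of a real tensor. -/
def fnorm {m : ℕ} {ι : Type} [Fintype ι] (T : (Fin m → ι) → ℝ) : ℝ :=
  Real.sqrt (∑ f : Fin m → ι, T f ^ 2)

/-- Q-eigenvalues are real. -/
theorem quantum_eigenvalue_is_real {m n : ℕ} (hm : 1 ≤ m)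
    (Ψ : (Fin (m + 1) → Fin n) → ℂ) (hΨ : SymmT Ψ)
    (lam : ℂ) (z : Fin n → ℂ) (hz : z ≠ 0)
    (h1 : tapplyC Ψ z = fun i => lam * (starRingEnd ℂ) (z i))
    (h2 : tapplyC (fun f => (starRingEnd ℂ) (Ψ f)) (fun i => (starRingEnd ℂ) (z i)) =
      fun i => lam * z i)
    (h3 : ∑ i, (starRingEnd ℂ) (z i) * z i = 1) :
    ∃ r : ℝ, lam = (r : ℂ) := by
  have key : ∀ i, (starRingEnd ℂ) (tapplyC Ψ z i) =
      tapplyC (fun f => (starRingEnd ℂ) (Ψ f)) (fun i => (starRingEnd ℂ) (z i)) i := by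
    intro i
    simp only [tapplyC, map_sum, map_mul, map_prod]
  have hS : ∑ i, z i * tapplyC Ψ z i = lam := by
    rw [h1]
    calc ∑ i, z i * (lam * (starRingEnd ℂ) (z i))
        = lam * ∑ i, (starRingEnd ℂ) (z i) * z i := by
          rw [Finset.mul_sum]; congr 1; ext i; ring
      _ = lam := by rw [h3, mul_one]
  have hS' : ∑ i, (starRingEnd ℂ) (z i) *
      tapplyC (fun f => (starRingEnd ℂ) (Ψ f)) (fun i => (starRingEnd ℂ) (z i)) i = lam := by
    rw [h2]
    calc ∑ i, (starRingEnd ℂ) (z i) * (lam * z i)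
        = lam * ∑ i, (starRingEnd ℂ) (z i) * z i := by
          rw [Finset.mul_sum]; congr 1; ext i; ring
      _ = lam := by rw [h3, mul_one]
  have hconj : (starRingEnd ℂ) lam = lam := by
    conv_lhs => rw [← hS]
    conv_rhs => rw [← hS']
    rw [map_sum]
    congr 1; ext i
    rw [map_mul, key i]
  exact ⟨lam.re, ((Complex.conj_eq_iff_re).mp hconj).symm⟩
end
end

section
/- Q-eigenvalues appear in pairs: if a real number λ is a Q-eigenvalue of an m-order n-dimensional symmetric complex tensor Ψ, then −λ is also a Q-eigenvalue of Ψ. Moreover, if z is a Q-eigenvector associated with λ, then z·e^{iπ/m} is a Q-eigenvector associated with −λ. -/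
open Finset

noncomputable section

/-- Q-eigenvalues appear in pairs, with eigenvector z·e^{iπ/m}. -/
theorem quantum_eigenvalues_in_pairs {m n : ℕ} (hm : 1 ≤ m)
    (Ψ : (Fin (m + 1) → Fin n) → ℂ) (hΨ : SymmT Ψ)
    (lam : ℝ) (z : Fin n → ℂ) (h : IsQEig Ψ lam z) :
    IsQEig Ψ (-lam)
      (fun i => z i * Complex.exp ((Real.pi / (m + 1)) * Complex.I)) := by
  obtain ⟨h1, h2⟩ := h
  set c : ℂ := Complex.exp ((Real.pi / (m + 1)) * Complex.I) with hc
  have hconj : (starRingEnd ℂ) c = Complex.exp (-((Real.pi / (m + 1)) * Complex.I)) := by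
    rw [← Complex.exp_conj]
    congr 1
    simp [map_div₀]
  have hcc : (starRingEnd ℂ) c * c = 1 := by
    rw [hconj, ← Complex.exp_add]
    simp
  have hm1 : ((m : ℂ) + 1) ≠ 0 := by
    exact Nat.cast_add_one_ne_zero m
  have hcm : c ^ m = -(starRingEnd ℂ) c := by
    rw [hconj, hc, ← Complex.exp_nat_mul, ← neg_one_mul, ← Complex.exp_pi_mul_I,
      ← Complex.exp_add]
    congr 1
    push_cast
    field_simp
    ring
  constructor
  · funext i
    have h1i := congrFun h1 i
    simp only [tapplyC] at h1i ⊢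
    have key : ∑ f : Fin m → Fin n, Ψ (Fin.cons i f) * ∏ j, (z (f j) * c) =
        (∑ f : Fin m → Fin n, Ψ (Fin.cons i f) * ∏ j, z (f j)) * c ^ m := by
      rw [Finset.sum_mul]
      refine Finset.sum_congr rfl fun f _ => ?_
      rw [Finset.prod_mul_distrib, Finset.prod_const, Finset.card_univ,
        Fintype.card_fin, mul_assoc]
    rw [key, h1i, hcm]
    push_cast
    rw [map_mul]
    ring
  · have key : ∀ i, (starRingEnd ℂ) (z i * c) * (z i * c) =
        ((starRingEnd ℂ) (z i) * z i) * ((starRingEnd ℂ) c * c) := by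
      intro i; rw [map_mul]; ring
    simp only [key, hcc, mul_one]
    exact h2
end
end

section
/- If λ is a Q-eigenvalue of a symmetric tensor Ψ with Q-eigenvector z, and z satisfies Ψ z^{m-1} = λ z̄ with z̄ᵀ z = 1 and λ real, then conj(Ψ) z̄^{m-1} = λ z holds automatically; i.e., the system {Ψ z^{m-1} = λ z̄, z̄ᵀz = 1, λ ∈ ℝ} is equivalent to the full quantum eigenvalue system {Ψ z^{m-1} = λ z̄, conj(Ψ) z̄^{m-1} = λ z, z̄ᵀz = 1}. -/
open Finset

noncomputable section

/-- the reduced system implies the full quantum eigenvalue system. -/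
theorem reduced_system_equiv_full {m n : ℕ} (hm : 1 ≤ m)
    (Ψ : (Fin (m + 1) → Fin n) → ℂ) (hΨ : SymmT Ψ)
    (lam : ℝ) (z : Fin n → ℂ)
    (h1 : tapplyC Ψ z = fun i => (lam : ℂ) * (starRingEnd ℂ) (z i))
    (h3 : ∑ i, (starRingEnd ℂ) (z i) * z i = 1) :
    tapplyC (fun f => (starRingEnd ℂ) (Ψ f)) (fun i => (starRingEnd ℂ) (z i)) =
      fun i => (lam : ℂ) * z i := by
  funext i
  have h := congrFun h1 i
  simp only [tapplyC] at h ⊢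
  calc ∑ f : Fin m → Fin n, (starRingEnd ℂ) (Ψ (Fin.cons i f)) * ∏ j, (starRingEnd ℂ) (z (f j))
      = (starRingEnd ℂ) (∑ f : Fin m → Fin n, Ψ (Fin.cons i f) * ∏ j, z (f j)) := by
        rw [map_sum]; exact Finset.sum_congr rfl fun f _ => by rw [map_mul, map_prod]
    _ = (lam : ℂ) * z i := by rw [h]; simp
end
end

section
/- If Ψ is an m-order n-dimensional real symmetric tensor, then the entanglement eigenvalue Q(Ψ) (the largest Q-eigenvalue) is greater than or equal to the Z-spectral radius Z(Ψ) (the largest absolute value of a Z-eigenvalue). -/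
open Finset

noncomputable section

/-!
Every Z-eigenpair `(λ, x)` of a real tensor is a Q-eigenpair with the real vector `x`.
The Q-spectrum is symmetric under `λ ↦ -λ`: rescaling `z` by a root `c` of `c ^ (m + 1) = -1`
on the unit circle multiplies `T z^m` by `c ^ m = -c̄`. Hence `|λ|` is a Q-eigenvalue for every
Z-eigenvalue `λ`, and the Q-spectrum is bounded above (by `∑ ‖T g‖`, since `‖z i‖ ≤ 1`), so the
supremum defining `Z(T)` is dominated by the one defining `Q(T)`.
-/

open ComplexConjugate

lemma sum_eq_sum_sum_cons {m : ℕ} {ι M : Type*} [Fintype ι] [AddCommMonoid M]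
    (F : (Fin (m + 1) → ι) → M) :
    ∑ g, F g = ∑ i, ∑ f : Fin m → ι, F (Fin.cons i f) :=
  (Fintype.sum_equiv (Fin.consEquiv fun _ => ι) (fun p => F (Fin.cons p.1 p.2)) F
    fun _ => rfl).symm.trans (Fintype.sum_prod_type _)

section Contraction

variable {m : ℕ} {ι : Type} [Fintype ι] (T : (Fin (m + 1) → ι) → ℂ)

lemma sum_mul_tapplyC (z : ι → ℂ) :
    ∑ i, z i * tapplyC T z i = ∑ g : Fin (m + 1) → ι, T g * ∏ j, z (g j) := by
  rw [sum_eq_sum_sum_cons]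
  refine sum_congr rfl fun i _ => ?_
  rw [tapplyC, mul_sum]
  refine sum_congr rfl fun f _ => ?_
  rw [Fin.prod_univ_succ]
  simp only [Fin.cons_zero, Fin.cons_succ]
  ring

lemma tapplyC_const_mul (c : ℂ) (z : ι → ℂ) :
    tapplyC T (fun i => c * z i) = fun i => c ^ m * tapplyC T z i := by
  funext i
  simp only [tapplyC, mul_sum, prod_mul_distrib, prod_const, card_univ, Fintype.card_fin]
  exact sum_congr rfl fun _ _ => by ring

end Contraction

lemma tapplyC_toC_ofReal {m : ℕ} {ι : Type} [Fintype ι] (T : (Fin (m + 1) → ι) → ℝ)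
    (x : ι → ℝ) : tapplyC (toC T) (fun i => (x i : ℂ)) = fun i => (tapplyR T x i : ℂ) := by
  funext i
  simp [tapplyC, tapplyR, toC]

lemma exists_pow_eq_neg_one_and_conj_mul_eq_one (k : ℕ) (hk : k ≠ 0) :
    ∃ c : ℂ, c ^ k = -1 ∧ conj c * c = 1 := by
  refine ⟨Complex.exp ((Real.pi / k : ℝ) * Complex.I), ?_, ?_⟩
  · rw [← Complex.exp_nat_mul, ← mul_assoc]
    push_cast
    rw [mul_div_cancel₀ _ (Nat.cast_ne_zero.mpr hk), Complex.exp_pi_mul_I]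
  · rw [Complex.conj_mul', Complex.norm_exp_ofReal_mul_I]
    norm_num

namespace IsQEig

variable {m : ℕ} {ι : Type} [Fintype ι] {T : (Fin (m + 1) → ι) → ℂ} {lam : ℝ} {z : ι → ℂ}

lemma ofReal_eq_sum (h : IsQEig T lam z) :
    (lam : ℂ) = ∑ g : Fin (m + 1) → ι, T g * ∏ j, z (g j) := by
  rw [← sum_mul_tapplyC, h.1]
  calc (lam : ℂ) = lam * ∑ i, conj (z i) * z i := by rw [h.2, mul_one]
    _ = ∑ i, z i * (lam * conj (z i)) := by
      rw [mul_sum]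
      exact sum_congr rfl fun _ _ => by ring

lemma norm_le_one (h : IsQEig T lam z) (i : ι) : ‖z i‖ ≤ 1 := by
  have hsum : ∑ j, ‖z j‖ ^ 2 = 1 := by
    have : ((∑ j, ‖z j‖ ^ 2 : ℝ) : ℂ) = 1 := by
      push_cast
      exact (sum_congr rfl fun j _ => (Complex.conj_mul' (z j)).symm).trans h.2
    exact_mod_cast this
  have hi : ‖z i‖ ^ 2 ≤ 1 :=
    hsum ▸ single_le_sum (fun j _ => sq_nonneg ‖z j‖) (mem_univ i)
  exact (sq_le_one_iff₀ (norm_nonneg _)).mp hi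

lemma abs_le_sum_norm (h : IsQEig T lam z) : |lam| ≤ ∑ g, ‖T g‖ := by
  calc |lam| = ‖∑ g : Fin (m + 1) → ι, T g * ∏ j, z (g j)‖ := by
        rw [← h.ofReal_eq_sum, Complex.norm_real, Real.norm_eq_abs]
    _ ≤ ∑ g : Fin (m + 1) → ι, ‖T g‖ * ∏ j, ‖z (g j)‖ := by
        simpa only [norm_mul, norm_prod] using
          norm_sum_le univ fun g : Fin (m + 1) → ι => T g * ∏ j, z (g j)
    _ ≤ ∑ g, ‖T g‖ := by
        refine sum_le_sum fun g _ => mul_le_of_le_one_right (norm_nonneg _) ?_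
        exact prod_le_one (fun _ _ => norm_nonneg _) fun j _ => h.norm_le_one _

lemma neg_of_pow_eq_neg_one (h : IsQEig T lam z) {c : ℂ} (hc : c ^ (m + 1) = -1)
    (hcc : conj c * c = 1) : IsQEig T (-lam) (fun i => c * z i) := by
  have hcm : c ^ m = -conj c := by
    have hc0 : c ≠ 0 := by rintro rfl; simp at hcc
    apply mul_right_cancel₀ hc0
    rw [← pow_succ, hc, neg_mul, hcc]
  refine ⟨?_, ?_⟩
  · rw [tapplyC_const_mul, h.1, hcm]
    funext i
    simp only [map_mul, Complex.ofReal_neg]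
    ring
  · simp only [map_mul]
    calc ∑ i, conj c * conj (z i) * (c * z i) = conj c * c * ∑ i, conj (z i) * z i := by
          rw [mul_sum]
          exact sum_congr rfl fun _ _ => by ring
      _ = 1 := by rw [hcc, h.2, one_mul]

lemma exists_neg (h : IsQEig T lam z) : ∃ z' : ι → ℂ, IsQEig T (-lam) z' := by
  obtain ⟨c, hc, hcc⟩ := exists_pow_eq_neg_one_and_conj_mul_eq_one (m + 1) m.succ_ne_zero
  exact ⟨_, h.neg_of_pow_eq_neg_one hc hcc⟩

lemma exists_abs (h : IsQEig T lam z) : ∃ z' : ι → ℂ, IsQEig T |lam| z' := by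
  rcases abs_choice lam with hl | hl
  · exact ⟨z, by rwa [hl]⟩
  · rw [hl]
    exact h.exists_neg

end IsQEig

lemma IsZEig.isQEig_toC {m : ℕ} {ι : Type} [Fintype ι] {T : (Fin (m + 1) → ι) → ℝ}
    {lam : ℝ} {x : ι → ℝ} (h : IsZEig T lam x) :
    IsQEig (toC T) lam (fun i => (x i : ℂ)) := by
  refine ⟨?_, ?_⟩
  · rw [tapplyC_toC_ofReal, h.1]
    funext i
    simp
  · have : ((∑ i, x i ^ 2 : ℝ) : ℂ) = 1 := by exact_mod_cast h.2
    push_cast at this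
    simpa only [Complex.conj_ofReal, sq] using this

section Spectrum

variable {m : ℕ} {ι : Type} [Fintype ι] (T : (Fin (m + 1) → ι) → ℝ)

lemma bddAbove_setOf_isQEig_toC : BddAbove {lam : ℝ | ∃ z : ι → ℂ, IsQEig (toC T) lam z} :=
  ⟨_, fun _ ⟨_, hz⟩ => (le_abs_self _).trans hz.abs_le_sum_norm⟩

lemma le_QmaxR {lam : ℝ} {z : ι → ℂ} (h : IsQEig (toC T) lam z) : lam ≤ QmaxR T :=
  le_csSup (bddAbove_setOf_isQEig_toC T) ⟨z, h⟩

lemma QmaxR_nonneg : 0 ≤ QmaxR T := by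
  rcases Set.eq_empty_or_nonempty {lam : ℝ | ∃ z : ι → ℂ, IsQEig (toC T) lam z}
    with hQ | ⟨_, _, hz⟩
  · rw [QmaxR, hQ, Real.sSup_empty]
  · obtain ⟨_, hz'⟩ := hz.exists_abs
    exact (abs_nonneg _).trans (le_QmaxR T hz')

end Spectrum

theorem Qmax_ge_Zrad_general {m n : ℕ}
    (Ψ : (Fin (m + 1) → Fin n) → ℝ) :
    Zrad Ψ ≤ QmaxR Ψ := by
  refine Real.sSup_le ?_ (QmaxR_nonneg Ψ)
  rintro _ ⟨lam, x, hx, rfl⟩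
  obtain ⟨z, hz⟩ := hx.isQEig_toC.exists_abs
  exact le_QmaxR Ψ hz

/-- entanglement eigenvalue ≥ Z-spectral radius for real symmetric tensors. -/
theorem Qmax_ge_Zrad {m n : ℕ} (hm : 1 ≤ m)
    (Ψ : (Fin (m + 1) → Fin n) → ℝ) (hΨ : SymmT Ψ) :
    Zrad Ψ ≤ QmaxR Ψ :=
  Qmax_ge_Zrad_general Ψ
end
end

section
/- Let A be a real symmetric n×n matrix (the case m = 2). If λ is a Q-eigenvalue of A with Q-eigenvector z = x + iy (x, y ∈ ℝⁿ), then Ax = λx, Ay = −λy, and at least one of x, y is nonzero; consequently Q(A) = Z(A), i.e., the entanglement eigenvalue of A equals its Z-spectral radius (the largest absolute value of its ordinary eigenvalues). -/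
open Finset

noncomputable section

/-- The largest Q-eigenvalue of a real matrix . -/
def QmaxM {n : ℕ} (A : Matrix (Fin n) (Fin n) ℝ) : ℝ :=
  sSup {lam : ℝ | ∃ z : Fin n → ℂ,
    (A.map (fun a => (a : ℂ))).mulVec z = (fun i => (lam : ℂ) * (starRingEnd ℂ) (z i)) ∧
    ∑ i, (starRingEnd ℂ) (z i) * z i = 1}

/-- The largest absolute value of real eigenvalues (with real unit eigenvectors) of . -/
def ZradM {n : ℕ} (A : Matrix (Fin n) (Fin n) ℝ) : ℝ :=
  sSup {r : ℝ | ∃ (lam : ℝ) (x : Fin n → ℝ),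
    A.mulVec x = lam • x ∧ ∑ i, x i ^ 2 = 1 ∧ r = |lam|}


lemma real_parts {n : ℕ} (A : Matrix (Fin n) (Fin n) ℝ) (lam : ℝ) (x y : Fin n → ℝ)
    (h1 : (A.map (fun a => (a : ℂ))).mulVec (fun i => (x i : ℂ) + (y i : ℂ) * Complex.I) =
      fun i => (lam : ℂ) * (starRingEnd ℂ) ((x i : ℂ) + (y i : ℂ) * Complex.I)) :
    A.mulVec x = lam • x ∧ A.mulVec y = (-lam) • y := by
  have key : ∀ i, A.mulVec x i = lam * x i ∧ A.mulVec y i = -lam * y i := by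
    intro i
    have h := congrFun h1 i
    simp only [Matrix.mulVec, dotProduct, Matrix.map_apply, Complex.ext_iff,
      Complex.re_sum, Complex.im_sum, Complex.add_re, Complex.add_im, Complex.mul_re,
      Complex.mul_im, Complex.ofReal_re, Complex.ofReal_im, Complex.I_re, Complex.I_im,
      Complex.neg_re, Complex.neg_im, map_add, map_mul, Complex.conj_I, Complex.conj_ofReal,
      mul_zero, zero_mul, mul_one, sub_zero, zero_add, add_zero, zero_sub, mul_neg] at h ⊢
    exact ⟨by simpa using h.1, by simpa using h.2⟩
  exact ⟨funext fun i => (key i).1, funext fun i => (key i).2⟩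


lemma norm_parts {n : ℕ} (x y : Fin n → ℝ)
    (h2 : ∑ i, (starRingEnd ℂ) ((x i : ℂ) + (y i : ℂ) * Complex.I) *
      ((x i : ℂ) + (y i : ℂ) * Complex.I) = 1) :
    ∑ i, (x i ^ 2 + y i ^ 2) = 1 := by
  have h := congrArg Complex.re h2
  simp only [Complex.re_sum, map_add, map_mul, Complex.conj_I, Complex.conj_ofReal,
    Complex.add_re, Complex.mul_re, Complex.add_im, Complex.mul_im, Complex.ofReal_re,
    Complex.ofReal_im, Complex.I_re, Complex.I_im, Complex.neg_re, Complex.neg_im,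
    Complex.one_re, mul_zero, zero_mul, mul_one, sub_zero, zero_add, add_zero, mul_neg,
    neg_zero, neg_neg, zero_sub] at h
  rw [← h]
  apply Finset.sum_congr rfl
  intro i _
  ring


lemma z_to_q {n : ℕ} (A : Matrix (Fin n) (Fin n) ℝ) (lam : ℝ) (x : Fin n → ℝ)
    (hAx : A.mulVec x = lam • x) (hx : ∑ i, x i ^ 2 = 1) :
    ∃ z : Fin n → ℂ,
      (A.map (fun a => (a : ℂ))).mulVec z = (fun i => ((|lam| : ℝ) : ℂ) * (starRingEnd ℂ) (z i)) ∧
      ∑ i, (starRingEnd ℂ) (z i) * z i = 1 := by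
  have hx' : ∑ i, x i * x i = 1 := by simpa [sq] using hx
  rcases le_or_gt 0 lam with hl | hl
  · refine ⟨fun i => (x i : ℂ), ?_, ?_⟩
    · funext i
      have h := congrFun hAx i
      simp only [Matrix.mulVec, dotProduct, Matrix.map_apply, Pi.smul_apply,
        smul_eq_mul] at h ⊢
      rw [abs_of_nonneg hl, Complex.conj_ofReal]
      exact_mod_cast h
    · simp only [Complex.conj_ofReal]
      exact_mod_cast hx'
  · refine ⟨fun i => (x i : ℂ) * Complex.I, ?_, ?_⟩
    · funext i
      have h := congrFun hAx i
      simp only [Matrix.mulVec, dotProduct, Matrix.map_apply, Pi.smul_apply,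
        smul_eq_mul] at h ⊢
      rw [abs_of_neg hl, map_mul, Complex.conj_ofReal, Complex.conj_I]
      have e : ∑ j, (A i j : ℂ) * ((x j : ℂ) * Complex.I)
          = (∑ j, (A i j : ℂ) * (x j : ℂ)) * Complex.I := by
        rw [Finset.sum_mul]
        exact Finset.sum_congr rfl fun j _ => (mul_assoc _ _ _).symm
      rw [e]
      have e2 : (∑ j, (A i j : ℂ) * (x j : ℂ)) = ((lam * x i : ℝ) : ℂ) := by exact_mod_cast h
      rw [e2]
      push_cast
      ring
    · have e : ∀ i, (starRingEnd ℂ) ((x i : ℂ) * Complex.I) * ((x i : ℂ) * Complex.I)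
          = ((x i * x i : ℝ) : ℂ) := by
        intro i
        rw [map_mul, Complex.conj_ofReal, Complex.conj_I]
        push_cast
        ring_nf
        simp [Complex.I_sq]
      simp only [e, ← Complex.ofReal_sum, hx', Complex.ofReal_one]


lemma normalize_eig {n : ℕ} (A : Matrix (Fin n) (Fin n) ℝ) (μ : ℝ) (v : Fin n → ℝ)
    (hv : v ≠ 0) (h : A.mulVec v = μ • v) :
    ∃ u : Fin n → ℝ, A.mulVec u = μ • u ∧ ∑ i, u i ^ 2 = 1 := by
  obtain ⟨i0, hi0⟩ := Function.ne_iff.1 hv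
  have hs : 0 < ∑ i, v i ^ 2 := by
    apply Finset.sum_pos' (fun i _ => sq_nonneg _)
    exact ⟨i0, Finset.mem_univ _, by simpa [sq_pos_iff] using hi0⟩
  set c : ℝ := (Real.sqrt (∑ i, v i ^ 2))⁻¹ with hc
  refine ⟨c • v, ?_, ?_⟩
  · rw [Matrix.mulVec_smul, h, smul_comm]
  · have hsq : c ^ 2 = (∑ i, v i ^ 2)⁻¹ := by
      rw [hc, ← Real.sqrt_inv, Real.sq_sqrt (by positivity)]
    have e : ∑ i, (c • v) i ^ 2 = c ^ 2 * ∑ i, v i ^ 2 := by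
      rw [Finset.mul_sum]; exact Finset.sum_congr rfl fun i _ => by simp [mul_pow]
    rw [e, hsq, inv_mul_cancel₀ hs.ne']

lemma z_bound {n : ℕ} (A : Matrix (Fin n) (Fin n) ℝ) (lam : ℝ) (x : Fin n → ℝ)
    (h : A.mulVec x = lam • x) (hx : ∑ i, x i ^ 2 = 1) :
    |lam| ≤ ∑ i, ∑ j, |A i j| := by
  have hx1 : ∀ i, |x i| ≤ 1 := by
    intro i
    have h1 : x i ^ 2 ≤ 1 := by
      have := Finset.single_le_sum (f := fun i => x i ^ 2) (fun i _ => sq_nonneg _)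
        (Finset.mem_univ i)
      linarith
    exact (sq_le_one_iff_abs_le_one _).1 h1
  have hlam : lam = ∑ i, ∑ j, x i * A i j * x j := by
    calc lam = lam * ∑ i, x i ^ 2 := by rw [hx]; ring
    _ = ∑ i, x i * A.mulVec x i := by
        rw [Finset.mul_sum]
        exact Finset.sum_congr rfl fun i _ => by rw [h]; simp; ring
    _ = ∑ i, ∑ j, x i * A i j * x j := by
        apply Finset.sum_congr rfl
        intro i _
        simp only [Matrix.mulVec, dotProduct, Finset.mul_sum]
        exact Finset.sum_congr rfl fun j _ => by ring
  rw [hlam]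
  calc |∑ i, ∑ j, x i * A i j * x j| ≤ ∑ i, |∑ j, x i * A i j * x j| :=
        Finset.abs_sum_le_sum_abs _ _
    _ ≤ ∑ i, ∑ j, |x i * A i j * x j| :=
        Finset.sum_le_sum fun i _ => Finset.abs_sum_le_sum_abs _ _
    _ ≤ ∑ i, ∑ j, |A i j| := by
        apply Finset.sum_le_sum; intro i _
        apply Finset.sum_le_sum; intro j _
        rw [abs_mul, abs_mul]
        calc |x i| * |A i j| * |x j| ≤ 1 * |A i j| * 1 := by
              apply mul_le_mul (mul_le_mul (hx1 i) le_rfl (abs_nonneg _) (by linarith [hx1 i]))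
                (hx1 j) (abs_nonneg _)
              positivity
          _ = |A i j| := by ring

/-- the matrix case . -/
theorem matrix_case {n : ℕ} (A : Matrix (Fin n) (Fin n) ℝ) (hA : A.IsSymm)
    (lam : ℝ) (x y : Fin n → ℝ)
    (h1 : (A.map (fun a => (a : ℂ))).mulVec (fun i => (x i : ℂ) + (y i : ℂ) * Complex.I) =
      fun i => (lam : ℂ) * (starRingEnd ℂ) ((x i : ℂ) + (y i : ℂ) * Complex.I))
    (h2 : ∑ i, (starRingEnd ℂ) ((x i : ℂ) + (y i : ℂ) * Complex.I) *
      ((x i : ℂ) + (y i : ℂ) * Complex.I) = 1) :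
    A.mulVec x = lam • x ∧ A.mulVec y = (-lam) • y ∧ (x ≠ 0 ∨ y ≠ 0) ∧
      QmaxM A = ZradM A := by
  obtain ⟨hx, hy⟩ := real_parts A lam x y h1
  have hnorm := norm_parts x y h2
  have hne : x ≠ 0 ∨ y ≠ 0 := by
    by_contra hc
    push_neg at hc
    rw [hc.1, hc.2] at hnorm
    simp at hnorm
  refine ⟨hx, hy, hne, ?_⟩
  set Q : Set ℝ := {lam : ℝ | ∃ z : Fin n → ℂ,
    (A.map (fun a => (a : ℂ))).mulVec z = (fun i => (lam : ℂ) * (starRingEnd ℂ) (z i)) ∧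
    ∑ i, (starRingEnd ℂ) (z i) * z i = 1} with hQdef
  set Z : Set ℝ := {r : ℝ | ∃ (lam : ℝ) (x : Fin n → ℝ),
    A.mulVec x = lam • x ∧ ∑ i, x i ^ 2 = 1 ∧ r = |lam|} with hZdef
  have habs : ∀ μ : ℝ, ∀ a b : Fin n → ℝ, A.mulVec a = μ • a → A.mulVec b = (-μ) • b →
      (a ≠ 0 ∨ b ≠ 0) → |μ| ∈ Z := by
    intro μ a b ha hb hab
    rcases hab with h0 | h0
    · obtain ⟨u, hu1, hu2⟩ := normalize_eig A μ a h0 ha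
      exact ⟨μ, u, hu1, hu2, rfl⟩
    · obtain ⟨u, hu1, hu2⟩ := normalize_eig A (-μ) b h0 hb
      exact ⟨-μ, u, hu1, hu2, (abs_neg μ).symm⟩
  have hZne : Z.Nonempty := ⟨|lam|, habs lam x y hx hy hne⟩
  have hQmem : ∀ μ ∈ Q, ∃ r ∈ Z, μ ≤ r := by
    intro μ hμ
    obtain ⟨z, hz1, hz2⟩ := hμ
    set a : Fin n → ℝ := fun i => (z i).re with hadef
    set b : Fin n → ℝ := fun i => (z i).im with hbdef
    have hz : z = fun i => (a i : ℂ) + (b i : ℂ) * Complex.I :=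
      funext fun i => (Complex.re_add_im (z i)).symm
    rw [hz] at hz1 hz2
    obtain ⟨ha, hb⟩ := real_parts A μ a b hz1
    have hnorm' := norm_parts a b hz2
    have hne' : a ≠ 0 ∨ b ≠ 0 := by
      by_contra hc
      push_neg at hc
      rw [hc.1, hc.2] at hnorm'
      simp at hnorm'
    exact ⟨|μ|, habs μ a b ha hb hne', le_abs_self μ⟩
  have hZsubQ : Z ⊆ Q := by
    rintro r ⟨lam', x', hA', hx', rfl⟩
    exact z_to_q A lam' x' hA' hx'
  have hQne : Q.Nonempty := ⟨lam, fun i => (x i : ℂ) + (y i : ℂ) * Complex.I, h1, h2⟩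
  set C : ℝ := ∑ i, ∑ j, |A i j| with hCdef
  have hZbd : ∀ r ∈ Z, r ≤ C := by
    rintro r ⟨lam', x', hA', hx', rfl⟩
    exact z_bound A lam' x' hA' hx'
  have hZbdd : BddAbove Z := ⟨C, hZbd⟩
  have hQbdd : BddAbove Q := ⟨C, fun μ hμ => by
    obtain ⟨r, hrZ, hle⟩ := hQmem μ hμ
    exact hle.trans (hZbd r hrZ)⟩
  show sSup Q = sSup Z
  refine le_antisymm (csSup_le hQne fun μ hμ => ?_) (csSup_le_csSup hQbdd hZne hZsubQ)
  obtain ⟨r, hrZ, hle⟩ := hQmem μ hμ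
  exact hle.trans (le_csSup hZbdd hrZ)
end
end

section
/- If Ψ is a real diagonal m-order n-dimensional tensor with diagonal entries a_{k⋯k}, then every Q-eigenvalue λ of Ψ satisfies |λ| ≤ max_k |a_{k⋯k}|. -/
open Finset

noncomputable section

/-
A diagonal tensor acts coordinatewise, `(Ψ zᵐ)ᵢ = aᵢ zᵢᵐ`, so taking moduli in `Ψ zᵐ = λ z̄`
gives `|λ| rᵢ = |aᵢ| rᵢᵐ` with `rᵢ = |zᵢ|` and `∑ rᵢ² = 1`. Multiplying by `rᵢ` and summing,
`|λ| = ∑ |aᵢ| rᵢ^(m+1) ≤ max |aᵢ| · ∑ rᵢ² = max |aᵢ|`, because `rᵢ ≤ 1` and `m + 1 ≥ 2`.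
-/

theorem sum_mul_pow_le_of_sum_sq_eq_one {ι : Type*} [Fintype ι] {a r : ι → ℝ} {M : ℝ} {k : ℕ}
    (hk : 2 ≤ k) (hM : 0 ≤ M) (ha : ∀ i, a i ≤ M) (hr₀ : ∀ i, 0 ≤ r i)
    (hr : ∑ i, r i ^ 2 = 1) : ∑ i, a i * r i ^ k ≤ M := by
  have hr₁ : ∀ i, r i ≤ 1 := fun i =>
    (sq_le_one_iff₀ (hr₀ i)).1 (hr ▸ single_le_sum (fun j _ => sq_nonneg (r j)) (mem_univ i))
  calc ∑ i, a i * r i ^ k ≤ ∑ i, M * r i ^ 2 := sum_le_sum fun i _ =>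
        mul_le_mul (ha i) (pow_le_pow_of_le_one (hr₀ i) (hr₁ i) hk) (pow_nonneg (hr₀ i) k) hM
    _ = M := by rw [← mul_sum, hr, mul_one]

def IsDiagonalTensor {k : ℕ} {ι R : Type} [Zero R] (T : (Fin (k + 1) → ι) → R) : Prop :=
  ∀ f : Fin (k + 1) → ι, (¬ ∀ t, f t = f 0) → T f = 0

section Diagonal

variable {m : ℕ} {ι : Type} [Fintype ι] {T : (Fin (m + 1) → ι) → ℂ}

theorem tapplyC_of_isDiagonalTensor (hdiag : IsDiagonalTensor T) (z : ι → ℂ) (i : ι) :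
    tapplyC T z i = T (fun _ => i) * z i ^ m := by
  rw [tapplyC, sum_eq_single (fun _ => i)]
  · rw [show Fin.cons i (fun _ : Fin m => i) = fun _ => i from
      Fin.cons_self_tail (fun _ : Fin (m + 1) => i)]
    simp
  · intro f _ hf
    rw [hdiag _ fun hall => hf (funext fun j => by simpa using hall j.succ), zero_mul]
  · simp

theorem IsQEig.sum_norm_sq {lam : ℝ} {z : ι → ℂ} (h : IsQEig T lam z) : ∑ i, ‖z i‖ ^ 2 = 1 := by
  have := h.2
  simp only [Complex.conj_mul'] at this
  exact_mod_cast this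

theorem IsQEig.abs_eq_sum_of_isDiagonalTensor (hdiag : IsDiagonalTensor T) {lam : ℝ}
    {z : ι → ℂ} (h : IsQEig T lam z) : |lam| = ∑ i, ‖T (fun _ => i)‖ * ‖z i‖ ^ (m + 1) := by
  have hpoint : ∀ i, |lam| * ‖z i‖ = ‖T (fun _ => i)‖ * ‖z i‖ ^ m := fun i => by
    have := congrArg norm (congrFun h.1 i)
    rwa [tapplyC_of_isDiagonalTensor hdiag, norm_mul, norm_mul, norm_pow, Complex.norm_conj,
      Complex.norm_real, Real.norm_eq_abs, eq_comm] at this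
  calc |lam| = ∑ i, |lam| * ‖z i‖ * ‖z i‖ := by
        simp only [mul_assoc, ← sq, ← mul_sum, h.sum_norm_sq, mul_one]
    _ = ∑ i, ‖T (fun _ => i)‖ * ‖z i‖ ^ (m + 1) := by
        simp only [hpoint, mul_assoc, pow_succ]

end Diagonal

/-- Q-eigenvalues of a real diagonal tensor are bounded by the largest
absolute diagonal entry. -/
theorem diagonal_tensor_Qeig_bound {m n : ℕ} (hm : 1 ≤ m) (hn : 0 < n)
    (Ψ : (Fin (m + 1) → Fin n) → ℝ)
    (hdiag : ∀ f : Fin (m + 1) → Fin n, (¬ ∀ t, f t = f 0) → Ψ f = 0)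
    (lam : ℝ) (z : Fin n → ℂ) (h : IsQEig (toC Ψ) lam z) :
    |lam| ≤ Finset.univ.sup' ⟨⟨0, hn⟩, Finset.mem_univ _⟩
      (fun k => |Ψ (fun _ => k)|) := by
  have hdiagC : IsDiagonalTensor (toC Ψ) := fun f hf => by simp [toC, hdiag f hf]
  rw [h.abs_eq_sum_of_isDiagonalTensor hdiagC]
  have hle : ∀ i, |Ψ (fun _ => i)| ≤ univ.sup' _ (fun k => |Ψ (fun _ => k)|) :=
    fun i => le_sup' (fun k => |Ψ (fun _ => k)|) (mem_univ i)
  refine sum_mul_pow_le_of_sum_sq_eq_one (by omega) ((abs_nonneg _).trans (hle ⟨0, hn⟩))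
    (fun i => ?_) (fun i => norm_nonneg _) h.sum_norm_sq
  simpa [toC] using hle i
end
end

section
/- Let A, B be real symmetric n×n matrices and set M = [[A, −B], [−B, −A]] ∈ ℝ^{2n×2n}. Then a real number λ is a Q-eigenvalue of the complex symmetric matrix Ψ = A + iB if and only if λ is an eigenvalue of the real symmetric matrix M; moreover z = x + iy is a Q-eigenvector of Ψ associated with λ if and only if w = (x; y) is a unit eigenvector of M associated with λ. -/
open Finset

noncomputable section

lemma eig_core {n : ℕ}
    (A B : Matrix (Fin n) (Fin n) ℝ)
    (Ψ : Matrix (Fin n) (Fin n) ℂ)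
    (hΨ : ∀ i j, Ψ i j = (A i j : ℂ) + (B i j : ℂ) * Complex.I)
    (lam : ℝ) (x y : Fin n → ℝ) :
    (Ψ.mulVec (fun i => (x i : ℂ) + (y i : ℂ) * Complex.I) =
        (fun i => (lam : ℂ) * (starRingEnd ℂ) ((x i : ℂ) + (y i : ℂ) * Complex.I))) ↔
      (Matrix.fromBlocks A (-B) (-B) (-A)).mulVec (Sum.elim x y)
        = lam • Sum.elim x y := by
  have hc : ∀ i, (Ψ.mulVec (fun i => (x i : ℂ) + (y i : ℂ) * Complex.I)) i =
      ((∑ j, (A i j * x j - B i j * y j) : ℝ) : ℂ) +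
      ((∑ j, (B i j * x j + A i j * y j) : ℝ) : ℂ) * Complex.I := by
    intro i
    simp only [Matrix.mulVec, dotProduct, hΨ]
    apply Complex.ext <;>
      simp [Complex.re_sum, Complex.im_sum, Finset.sum_sub_distrib,
        Finset.sum_add_distrib] <;> ring
  constructor
  · intro h
    funext s
    cases s with
    | inl i =>
      have hi := congrFun h i
      rw [hc i] at hi
      have hre := congrArg Complex.re hi
      simp [Finset.sum_sub_distrib] at hre
      simp [Matrix.mulVec, dotProduct, Fintype.sum_sum_type,
        Finset.sum_sub_distrib]
      linarith
    | inr i =>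
      have hi := congrFun h i
      rw [hc i] at hi
      have him := congrArg Complex.im hi
      simp [Finset.sum_add_distrib] at him
      simp [Matrix.mulVec, dotProduct, Fintype.sum_sum_type,
        Finset.sum_add_distrib] <;> ring
      linarith
  · intro h
    funext i
    rw [hc i]
    have h1 := congrFun h (Sum.inl i)
    have h2 := congrFun h (Sum.inr i)
    simp [Matrix.mulVec, dotProduct, Fintype.sum_sum_type,
      Finset.sum_sub_distrib, Finset.sum_add_distrib] at h1 h2
    apply Complex.ext <;>
      simp [Finset.sum_sub_distrib, Finset.sum_add_distrib] <;> linarith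

lemma norm_core {n : ℕ} (x y : Fin n → ℝ) :
    (∑ i, (starRingEnd ℂ) ((x i : ℂ) + (y i : ℂ) * Complex.I) *
        ((x i : ℂ) + (y i : ℂ) * Complex.I) = 1) ↔
      ∑ i : Fin n ⊕ Fin n, Sum.elim x y i ^ 2 = 1 := by
  have he : ∀ i, (starRingEnd ℂ) ((x i : ℂ) + (y i : ℂ) * Complex.I) *
      ((x i : ℂ) + (y i : ℂ) * Complex.I) = ((x i ^ 2 + y i ^ 2 : ℝ) : ℂ) := by
    intro i
    apply Complex.ext <;> simp [← Complex.ofReal_pow] <;> ring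
  simp only [he]
  rw [← Complex.ofReal_sum]
  rw [show (1 : ℂ) = ((1 : ℝ) : ℂ) by norm_num, Complex.ofReal_inj]
  rw [Fintype.sum_sum_type]
  simp [Finset.sum_add_distrib]

/-- the m = 2 case; Q-eigenvalues of Ψ = A + iB correspond to
eigenvalues of the real symmetric block matrix M = [[A, -B], [-B, -A]]. -/
theorem matrix_block_correspondence {n : ℕ}
    (A B : Matrix (Fin n) (Fin n) ℝ) (hA : A.IsSymm) (hB : B.IsSymm)
    (Ψ : Matrix (Fin n) (Fin n) ℂ)
    (hΨ : ∀ i j, Ψ i j = (A i j : ℂ) + (B i j : ℂ) * Complex.I)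
    (M : Matrix (Fin n ⊕ Fin n) (Fin n ⊕ Fin n) ℝ)
    (hM : M = Matrix.fromBlocks A (-B) (-B) (-A)) (lam : ℝ) :
    ((∃ z : Fin n → ℂ,
        Ψ.mulVec z = (fun i => (lam : ℂ) * (starRingEnd ℂ) (z i)) ∧
        ∑ i, (starRingEnd ℂ) (z i) * z i = 1) ↔
      ∃ w : Fin n ⊕ Fin n → ℝ, w ≠ 0 ∧ M.mulVec w = lam • w) ∧
    (∀ x y : Fin n → ℝ,
      (Ψ.mulVec (fun i => (x i : ℂ) + (y i : ℂ) * Complex.I) =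
          (fun i => (lam : ℂ) * (starRingEnd ℂ) ((x i : ℂ) + (y i : ℂ) * Complex.I)) ∧
        ∑ i, (starRingEnd ℂ) ((x i : ℂ) + (y i : ℂ) * Complex.I) *
          ((x i : ℂ) + (y i : ℂ) * Complex.I) = 1) ↔
      (M.mulVec (Sum.elim x y) = lam • Sum.elim x y ∧
        ∑ i, Sum.elim x y i ^ 2 = 1)) := by
  subst hM
  have part2 : ∀ x y : Fin n → ℝ,
      (Ψ.mulVec (fun i => (x i : ℂ) + (y i : ℂ) * Complex.I) =
          (fun i => (lam : ℂ) * (starRingEnd ℂ) ((x i : ℂ) + (y i : ℂ) * Complex.I)) ∧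
        ∑ i, (starRingEnd ℂ) ((x i : ℂ) + (y i : ℂ) * Complex.I) *
          ((x i : ℂ) + (y i : ℂ) * Complex.I) = 1) ↔
      ((Matrix.fromBlocks A (-B) (-B) (-A)).mulVec (Sum.elim x y)
          = lam • Sum.elim x y ∧
        ∑ i, Sum.elim x y i ^ 2 = 1) :=
    fun x y => and_congr (eig_core A B Ψ hΨ lam x y) (norm_core x y)
  refine ⟨⟨?_, ?_⟩, part2⟩
  · rintro ⟨z, hz1, hz2⟩
    set x := fun i => (z i).re with hx
    set y := fun i => (z i).im with hy
    have hz : z = fun i => (x i : ℂ) + (y i : ℂ) * Complex.I :=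
      funext fun i => (Complex.re_add_im (z i)).symm
    rw [hz] at hz1 hz2
    have h := (part2 x y).1 ⟨hz1, hz2⟩
    refine ⟨Sum.elim x y, ?_, h.1⟩
    intro h0
    have := h.2
    rw [h0] at this
    simp at this
  · rintro ⟨w, hw0, hw⟩
    have hspos : 0 < ∑ i, w i ^ 2 := by
      have hex : ∃ i, w i ≠ 0 := by
        by_contra hc
        push_neg at hc
        exact hw0 (funext fun i => hc i)
      obtain ⟨i, hi⟩ := hex
      exact Finset.sum_pos' (fun j _ => sq_nonneg _)
        ⟨i, Finset.mem_univ i, by positivity⟩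
    set s := Real.sqrt (∑ i, w i ^ 2) with hsdef
    have hs : 0 < s := Real.sqrt_pos.2 hspos
    set w' : Fin n ⊕ Fin n → ℝ := s⁻¹ • w with hw'def
    have hw'eig : (Matrix.fromBlocks A (-B) (-B) (-A)).mulVec w' = lam • w' := by
      rw [hw'def, Matrix.mulVec_smul, hw, smul_comm]
    have hnorm : ∑ i, w' i ^ 2 = 1 := by
      simp only [hw'def, Pi.smul_apply, smul_eq_mul, mul_pow, ← Finset.mul_sum]
      rw [← Real.sq_sqrt hspos.le, ← hsdef]
      field_simp
    set x := fun i => w' (Sum.inl i) with hx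
    set y := fun i => w' (Sum.inr i) with hy
    have hwe : Sum.elim x y = w' := by
      funext t; cases t <;> rfl
    obtain ⟨h1, h2⟩ := (part2 x y).2 (by rw [hwe]; exact ⟨hw'eig, hnorm⟩)
    exact ⟨fun i => (x i : ℂ) + (y i : ℂ) * Complex.I, h1, h2⟩
end
end

section
/- Let Ψ = 𝒜 + i𝓑 be an m-order n-dimensional symmetric complex tensor (𝒜, 𝓑 real symmetric), m ≥ 3. Define the m-order 2n-dimensional real symmetric tensor 𝒯 by 𝒯_{i₁⋯i_m} = (−1)^j 𝒜_{î₁⋯î_m} when exactly 2j of the indices exceed n, and 𝒯_{i₁⋯i_m} = (−1)^{j+1} 𝓑_{î₁⋯î_m} when exactly 2j+1 of the indices exceed n, where î = i if i ≤ n and î = i − n otherwise. Then λ ∈ ℝ is a Q-eigenvalue of Ψ with Q-eigenvector z = x + iy if and only if λ is a Z-eigenvalue of 𝒯 with Z-eigenvector w = (x; y). -/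
open Finset

noncomputable section

def Tc (A B : ℝ) (k : ℕ) : ℝ :=
  if Even k then (-1 : ℝ) ^ (k / 2) * A else (-1 : ℝ) ^ (k / 2 + 1) * B

lemma Tc_add_two (A B : ℝ) (k : ℕ) : Tc A B (k + 2) = -Tc A B k := by
  unfold Tc
  have h2 : (k + 2) / 2 = k / 2 + 1 := Nat.add_div_right k (by norm_num)
  by_cases h : Even k
  · rw [if_pos (by simpa using h.add (even_two)), if_pos h, h2, pow_succ]; ring
  · rw [if_neg (by simpa [Nat.even_add] using h), if_neg h, h2, pow_succ]; ring

lemma key (A B : ℝ) (k : ℕ) :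
    (((A : ℂ) + (B : ℂ) * Complex.I) * Complex.I ^ k).re = Tc A B k ∧
    (((A : ℂ) + (B : ℂ) * Complex.I) * Complex.I ^ k).im = -Tc A B (k + 1) := by
  induction k with
  | zero => simp [Tc]
  | succ k ih =>
    rw [pow_succ, ← mul_assoc]
    constructor
    · simp [Complex.mul_re, ih.2]
    · simp [Complex.mul_im, ih.1, Tc_add_two]

def pr {m n : ℕ} (f : Fin m → Fin n) (s : Fin m → Bool) : Fin m → Fin n ⊕ Fin n :=
  fun j => if s j then Sum.inr (f j) else Sum.inl (f j)

def eFS (m n : ℕ) : (Fin m → Fin n) × (Fin m → Bool) ≃ (Fin m → Fin n ⊕ Fin n) where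
  toFun p := pr p.1 p.2
  invFun g := (fun j => Sum.elim id id (g j), fun j => (g j).isRight)
  left_inv p := by
    obtain ⟨f, s⟩ := p
    simp only [Prod.mk.injEq]
    constructor <;> funext j <;> cases h : s j <;> simp [pr, h]
  right_inv g := by
    funext j; cases h : g j <;> simp [pr, h]

lemma sum_pair {m n : ℕ} (F : (Fin m → Fin n ⊕ Fin n) → ℝ) :
    ∑ g, F g = ∑ f : Fin m → Fin n, ∑ s : Fin m → Bool, F (pr f s) := by
  rw [← Equiv.sum_comp (eFS m n) F, Fintype.sum_prod_type]; rfl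

lemma count_cons {m n : ℕ} (a : Fin n ⊕ Fin n) (g : Fin m → Fin n ⊕ Fin n) :
    (univ.filter fun t => ((Fin.cons a g : Fin (m+1) → Fin n ⊕ Fin n) t).isRight = true).card
      = (if a.isRight then 1 else 0) + (univ.filter fun j => (g j).isRight = true).card := by
  rw [Finset.card_filter, Finset.card_filter, Fin.sum_univ_succ]
  simp

lemma count_pr {m n : ℕ} (f : Fin m → Fin n) (s : Fin m → Bool) :
    (univ.filter fun j => (pr f s j).isRight = true).card
      = (univ.filter fun j => s j = true).card := by
  congr 1; apply Finset.filter_congr; intro j _; cases h : s j <;> simp [pr, h]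

lemma hat_cons {m n : ℕ} (a : Fin n ⊕ Fin n) (f : Fin m → Fin n) (s : Fin m → Bool) :
    (fun t => Sum.elim id id ((Fin.cons a (pr f s) : Fin (m+1) → Fin n ⊕ Fin n) t))
      = Fin.cons (Sum.elim id id a) f := by
  funext t
  refine Fin.cases ?_ (fun j => ?_) t
  · simp
  · cases h : s j <;> simp [pr, h]

lemma prod_expand {m n : ℕ} (x y : Fin n → ℝ) (f : Fin m → Fin n) :
    ∏ j, ((x (f j) : ℂ) + (y (f j) : ℂ) * Complex.I)
      = ∑ s : Fin m → Bool, Complex.I ^ (univ.filter fun j => s j = true).card *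
          ((∏ j, if s j then y (f j) else x (f j) : ℝ) : ℂ) := by
  calc ∏ j, ((x (f j) : ℂ) + (y (f j) : ℂ) * Complex.I)
      = ∏ j, ∑ b : Bool, (if b then (y (f j) : ℂ) * Complex.I else (x (f j) : ℂ)) := by
        refine Finset.prod_congr rfl fun j _ => ?_
        rw [Fintype.sum_bool]; simp [add_comm]
    _ = ∑ s : Fin m → Bool, ∏ j, (if s j then (y (f j) : ℂ) * Complex.I else (x (f j) : ℂ)) :=
        Fintype.prod_sum _
    _ = _ := by
        refine Finset.sum_congr rfl fun s _ => ?_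
        have h1 : ∀ j, (if s j then (y (f j) : ℂ) * Complex.I else (x (f j) : ℂ))
            = (if s j then (y (f j) : ℂ) else (x (f j) : ℂ)) * (if s j then Complex.I else 1) := by
          intro j; cases h : s j <;> simp [h]
        have hI : (∏ j, if s j then Complex.I else 1)
            = Complex.I ^ (univ.filter fun j => s j = true).card := by
          rw [Finset.prod_ite, Finset.prod_const, Finset.prod_const, one_pow, mul_one]
        rw [Finset.prod_congr rfl fun j _ => h1 j, Finset.prod_mul_distrib, hI, mul_comm]
        congr 1
        push_cast [apply_ite (Complex.ofReal)]
        rfl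

lemma aux {m n : ℕ} (𝒜 𝓑 : (Fin (m + 1) → Fin n) → ℝ)
    (Ψ : (Fin (m + 1) → Fin n) → ℂ)
    (hΨ : ∀ f, Ψ f = (𝒜 f : ℂ) + (𝓑 f : ℂ) * Complex.I)
    (𝒯 : (Fin (m + 1) → Fin n ⊕ Fin n) → ℝ)
    (h𝒯 : ∀ g : Fin (m + 1) → Fin n ⊕ Fin n,
      𝒯 g =
        if Even ((Finset.univ.filter fun t => (g t).isRight = true).card) then
          (-1 : ℝ) ^ (((Finset.univ.filter fun t => (g t).isRight = true).card) / 2) *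
            𝒜 (fun t => Sum.elim id id (g t))
        else
          (-1 : ℝ) ^ ((((Finset.univ.filter fun t => (g t).isRight = true).card) / 2) + 1) *
            𝓑 (fun t => Sum.elim id id (g t)))
    (x y : Fin n → ℝ) (a : Fin n ⊕ Fin n) :
    tapplyR 𝒯 (Sum.elim x y) a =
      Sum.elim
        (fun i => (tapplyC Ψ (fun i => (x i : ℂ) + (y i : ℂ) * Complex.I) i).re)
        (fun i => -(tapplyC Ψ (fun i => (x i : ℂ) + (y i : ℂ) * Complex.I) i).im) a := by
  classical
  set ia : Fin n := Sum.elim id id a with hia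
  -- Step A: the real side
  have stepA : tapplyR 𝒯 (Sum.elim x y) a
      = ∑ f : Fin m → Fin n, ∑ s : Fin m → Bool,
          Tc (𝒜 (Fin.cons ia f)) (𝓑 (Fin.cons ia f))
            ((if a.isRight then 1 else 0) + (univ.filter fun j => s j = true).card) *
          (∏ j, if s j then y (f j) else x (f j)) := by
    rw [tapplyR, sum_pair]
    refine Finset.sum_congr rfl fun f _ => Finset.sum_congr rfl fun s _ => ?_
    congr 1
    · rw [h𝒯, count_cons, count_pr, hat_cons, ← hia]
      rfl
    · refine Finset.prod_congr rfl fun j _ => ?_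
      cases h : s j <;> simp [pr, h]
  -- Step B: the complex side
  have stepB : ∀ i : Fin n,
      tapplyC Ψ (fun i => (x i : ℂ) + (y i : ℂ) * Complex.I) i
        = ∑ f : Fin m → Fin n, ∑ s : Fin m → Bool,
            (((𝒜 (Fin.cons i f) : ℂ) + (𝓑 (Fin.cons i f) : ℂ) * Complex.I) *
              Complex.I ^ (univ.filter fun j => s j = true).card) *
            ((∏ j, if s j then y (f j) else x (f j) : ℝ) : ℂ) := by
    intro i
    rw [tapplyC]
    refine Finset.sum_congr rfl fun f _ => ?_
    rw [hΨ, prod_expand, Finset.mul_sum]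
    exact Finset.sum_congr rfl fun s _ => by ring
  have hre : ∀ i : Fin n,
      (tapplyC Ψ (fun i => (x i : ℂ) + (y i : ℂ) * Complex.I) i).re
        = ∑ f : Fin m → Fin n, ∑ s : Fin m → Bool,
            Tc (𝒜 (Fin.cons i f)) (𝓑 (Fin.cons i f)) ((univ.filter fun j => s j = true).card) *
            (∏ j, if s j then y (f j) else x (f j)) := by
    intro i
    rw [stepB i, Complex.re_sum]
    refine Finset.sum_congr rfl fun f _ => ?_
    rw [Complex.re_sum]
    refine Finset.sum_congr rfl fun s _ => ?_
    rw [Complex.mul_re, Complex.ofReal_re, Complex.ofReal_im, mul_zero, sub_zero,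
      (key _ _ _).1]
  have him : ∀ i : Fin n,
      (tapplyC Ψ (fun i => (x i : ℂ) + (y i : ℂ) * Complex.I) i).im
        = ∑ f : Fin m → Fin n, ∑ s : Fin m → Bool,
            -(Tc (𝒜 (Fin.cons i f)) (𝓑 (Fin.cons i f))
                ((univ.filter fun j => s j = true).card + 1) *
              (∏ j, if s j then y (f j) else x (f j))) := by
    intro i
    rw [stepB i, Complex.im_sum]
    refine Finset.sum_congr rfl fun f _ => ?_
    rw [Complex.im_sum]
    refine Finset.sum_congr rfl fun s _ => ?_
    rw [Complex.mul_im, Complex.ofReal_re, Complex.ofReal_im, mul_zero, zero_add,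
      (key _ _ _).2, neg_mul]
  cases a with
  | inl i =>
    simp only [Sum.elim_inl]
    rw [stepA, hre]
    simp [hia]
  | inr i =>
    simp only [Sum.elim_inr]
    rw [stepA, him]
    simp only [Finset.sum_neg_distrib, neg_neg]
    refine Finset.sum_congr rfl fun f _ => Finset.sum_congr rfl fun s _ => ?_
    simp [hia, add_comm]

theorem convert_Q_to_Z' {m n : ℕ}
    (𝒜 𝓑 : (Fin (m + 1) → Fin n) → ℝ)
    (Ψ : (Fin (m + 1) → Fin n) → ℂ)
    (hΨ : ∀ f, Ψ f = (𝒜 f : ℂ) + (𝓑 f : ℂ) * Complex.I)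
    (𝒯 : (Fin (m + 1) → Fin n ⊕ Fin n) → ℝ)
    (h𝒯 : ∀ g : Fin (m + 1) → Fin n ⊕ Fin n,
      𝒯 g =
        if Even ((Finset.univ.filter fun t => (g t).isRight = true).card) then
          (-1 : ℝ) ^ (((Finset.univ.filter fun t => (g t).isRight = true).card) / 2) *
            𝒜 (fun t => Sum.elim id id (g t))
        else
          (-1 : ℝ) ^ ((((Finset.univ.filter fun t => (g t).isRight = true).card) / 2) + 1) *
            𝓑 (fun t => Sum.elim id id (g t)))
    (lam : ℝ) (x y : Fin n → ℝ) :
    (tapplyC Ψ (fun i => (x i : ℂ) + (y i : ℂ) * Complex.I) =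
        (fun i => (lam : ℂ) * (starRingEnd ℂ) ((x i : ℂ) + (y i : ℂ) * Complex.I)) ∧
      ∑ i, (starRingEnd ℂ) ((x i : ℂ) + (y i : ℂ) * Complex.I) *
        ((x i : ℂ) + (y i : ℂ) * Complex.I) = 1) ↔
      (tapplyR 𝒯 (Sum.elim x y) = (fun a => lam * Sum.elim x y a) ∧
        ∑ a, Sum.elim x y a ^ 2 = 1) := by
  have haux := aux 𝒜 𝓑 Ψ hΨ 𝒯 h𝒯 x y
  have hc : ∀ i : Fin n,
      ((lam : ℂ) * (starRingEnd ℂ) ((x i : ℂ) + (y i : ℂ) * Complex.I)).re = lam * x i ∧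
      ((lam : ℂ) * (starRingEnd ℂ) ((x i : ℂ) + (y i : ℂ) * Complex.I)).im = -(lam * y i) := by
    intro i
    constructor <;> simp [Complex.mul_re, Complex.mul_im]
  have hnorm : (∑ i, (starRingEnd ℂ) ((x i : ℂ) + (y i : ℂ) * Complex.I) *
      ((x i : ℂ) + (y i : ℂ) * Complex.I)) = ((∑ a, Sum.elim x y a ^ 2 : ℝ) : ℂ) := by
    rw [Fintype.sum_sum_type]
    push_cast
    rw [← Finset.sum_add_distrib]
    refine Finset.sum_congr rfl fun i _ => ?_
    have := Complex.normSq_add_mul_I (x i) (y i)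
    rw [← Complex.normSq_eq_conj_mul_self]
    rw [show ((x i : ℂ) + (y i : ℂ) * Complex.I) = Complex.mk (x i) (y i) by
      simp [Complex.mk_eq_add_mul_I]]
    simp [Complex.normSq_mk]
    ring
  constructor
  · rintro ⟨hq, hn⟩
    refine ⟨funext fun a => ?_, ?_⟩
    · rw [haux a]
      cases a with
      | inl i =>
        simp only [Sum.elim_inl]
        rw [congrFun hq i]
        exact (hc i).1
      | inr i =>
        simp only [Sum.elim_inr]
        rw [congrFun hq i, (hc i).2]
        ring
    · rw [hnorm] at hn
      exact_mod_cast hn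
  · rintro ⟨hzeq, hn⟩
    refine ⟨funext fun i => ?_, ?_⟩
    · have h1 := congrFun hzeq (Sum.inl i)
      have h2 := congrFun hzeq (Sum.inr i)
      rw [haux (Sum.inl i)] at h1
      rw [haux (Sum.inr i)] at h2
      simp only [Sum.elim_inl, Sum.elim_inr] at h1 h2
      apply Complex.ext
      · rw [(hc i).1]; exact h1
      · rw [(hc i).2]; linarith
    · rw [hnorm]
      exact_mod_cast hn

/-- conversion of the Q-eigenvalue problem of Ψ = 𝒜 + i𝓑 to the
Z-eigenvalue problem of the 2n-dimensional real tensor 𝒯. -/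
theorem convert_Q_to_Z {m n : ℕ} (hm : 2 ≤ m)
    (𝒜 𝓑 : (Fin (m + 1) → Fin n) → ℝ) (h𝒜 : SymmT 𝒜) (h𝓑 : SymmT 𝓑)
    (Ψ : (Fin (m + 1) → Fin n) → ℂ)
    (hΨ : ∀ f, Ψ f = (𝒜 f : ℂ) + (𝓑 f : ℂ) * Complex.I)
    (𝒯 : (Fin (m + 1) → Fin n ⊕ Fin n) → ℝ)
    (h𝒯 : ∀ g : Fin (m + 1) → Fin n ⊕ Fin n,
      𝒯 g =
        if Even ((Finset.univ.filter fun t => (g t).isRight = true).card) then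
          (-1 : ℝ) ^ (((Finset.univ.filter fun t => (g t).isRight = true).card) / 2) *
            𝒜 (fun t => Sum.elim id id (g t))
        else
          (-1 : ℝ) ^ ((((Finset.univ.filter fun t => (g t).isRight = true).card) / 2) + 1) *
            𝓑 (fun t => Sum.elim id id (g t)))
    (lam : ℝ) (x y : Fin n → ℝ) :
    IsQEig Ψ lam (fun i => (x i : ℂ) + (y i : ℂ) * Complex.I) ↔
      IsZEig 𝒯 lam (Sum.elim x y) :=
  convert_Q_to_Z' 𝒜 𝓑 Ψ hΨ 𝒯 h𝒯 lam x y
end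
end

section
/- Let Ψ be an m-order n-dimensional real symmetric tensor and 𝒯 the associated m-order 2n-dimensional real symmetric tensor defined by 𝒯_{i₁⋯i_m} = (−1)^j Ψ_{î₁⋯î_m} when exactly 2j of the indices exceed n, and 0 when an odd number of indices exceed n. Then the Frobenius norm satisfies ‖𝒯‖ = 2^{(m−1)/2} ‖Ψ‖. -/
/-! Record each index of `𝒯` as a base index in `Fin n` together with a flag saying whether it
exceeds `n`. Then `𝒯 g ^ 2` is `Ψ f ^ 2` when an even number of flags is raised and `0` otherwise,
so `‖𝒯‖² = N ‖Ψ‖²` with `N` the number of even flag patterns on `m + 1` indices. Since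
`∑ₛ (-1) ^ #s = ∏ₜ (1 - 1) = 0`, exactly half of the `2 ^ (m + 1)` patterns are even: `N = 2 ^ m`. -/

open Finset

noncomputable section

section
variable {ι : Type*} [Fintype ι] [DecidableEq ι]

theorem sum_neg_one_pow_card_filter_true [Nonempty ι] :
    ∑ s : ι → Bool, (-1 : ℤ) ^ #{t | s t} = 0 := by
  calc ∑ s : ι → Bool, (-1 : ℤ) ^ #{t | s t}
      = ∑ s : ι → Bool, ∏ t, if s t then -1 else 1 := by
        simp only [prod_ite, prod_const_one, mul_one, prod_const]
    _ = ∏ _t : ι, ∑ b : Bool, if b then (-1 : ℤ) else 1 :=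
        (Fintype.prod_sum fun (_ : ι) (b : Bool) => if b then (-1 : ℤ) else 1).symm
    _ = 0 := by simp

theorem card_filter_even_card_filter_true [Nonempty ι] :
    #{s : ι → Bool | Even #{t | s t}} = 2 ^ (Fintype.card ι - 1) := by
  have hsum : ∑ s : ι → Bool, (1 + (-1 : ℤ) ^ #{t | s t}) = 2 ^ Fintype.card ι := by
    simp [sum_add_distrib, sum_neg_one_pow_card_filter_true]
  have hterm : ∀ s : ι → Bool,
      1 + (-1 : ℤ) ^ #{t | s t} = if Even #{t | s t} then 2 else 0 := by
    intro s
    rcases Nat.even_or_odd #{t | s t} with h | h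
    · simp [h, h.neg_one_pow]
    · simp [h.neg_one_pow, Nat.not_even_iff_odd.mpr h]
  rw [sum_congr rfl fun s _ => hterm s, sum_ite, sum_const_zero, add_zero, sum_const,
    nsmul_eq_mul] at hsum
  obtain ⟨k, hk⟩ := Nat.exists_eq_add_one.mpr (Fintype.card_pos (α := ι))
  rw [hk, pow_succ] at hsum
  rw [hk, Nat.add_sub_cancel]
  exact_mod_cast mul_right_cancel₀ two_ne_zero hsum

end

def arrowSumSelfEquiv (ι α : Type*) : (ι → α ⊕ α) ≃ (ι → Bool) × (ι → α) where
  toFun g := (fun t => (g t).isRight, fun t => Sum.elim id id (g t))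
  invFun p t := if p.1 t then .inr (p.2 t) else .inl (p.2 t)
  left_inv g := by
    funext t
    cases h : g t <;> simp [h]
  right_inv p := by
    ext t <;> dsimp only <;> cases p.1 t <;> rfl

theorem sum_arrow_sum_self {ι α M : Type*} [Fintype ι] [Fintype α] [DecidableEq ι]
    [AddCommMonoid M] (F : (ι → Bool) → (ι → α) → M) :
    ∑ g : ι → α ⊕ α, F (fun t => (g t).isRight) (fun t => Sum.elim id id (g t)) =
      ∑ s, ∑ f, F s f :=
  (Fintype.sum_equiv (arrowSumSelfEquiv ι α) _ (fun p => F p.1 p.2) fun _ => rfl).trans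
    (Fintype.sum_prod_type _)

theorem converted_tensor_norm_general {m n : ℕ}
    (Ψ : (Fin (m + 1) → Fin n) → ℝ)
    (𝒯 : (Fin (m + 1) → Fin n ⊕ Fin n) → ℝ)
    (h𝒯 : ∀ g : Fin (m + 1) → Fin n ⊕ Fin n,
      𝒯 g =
        if Even ((Finset.univ.filter fun t => (g t).isRight = true).card) then
          (-1 : ℝ) ^ (((Finset.univ.filter fun t => (g t).isRight = true).card) / 2) *
            Ψ (fun t => Sum.elim id id (g t))
        else 0) :
    fnorm 𝒯 = (2 : ℝ) ^ ((m : ℝ) / 2) * fnorm Ψ := by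
  have h𝒯_sq : ∀ g, 𝒯 g ^ 2 =
      if Even #{t | (g t).isRight} then Ψ (fun t => Sum.elim id id (g t)) ^ 2 else 0 := by
    intro g
    rw [h𝒯]
    split_ifs <;> simp [mul_pow, ← pow_mul, pow_mul']
  have hsum : ∑ g, 𝒯 g ^ 2 = 2 ^ m * ∑ f, Ψ f ^ 2 := by
    rw [Fintype.sum_congr _ _ h𝒯_sq,
      sum_arrow_sum_self fun (s : Fin (m + 1) → Bool) f => if Even #{t | s t} then Ψ f ^ 2 else 0,
      sum_comm, mul_sum]
    simp only [sum_ite, sum_const_zero, add_zero, sum_const, nsmul_eq_mul,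
      card_filter_even_card_filter_true, Fintype.card_fin, Nat.add_sub_cancel, Nat.cast_pow,
      Nat.cast_ofNat]
  rw [fnorm, fnorm, hsum, Real.sqrt_mul (by positivity), Real.sqrt_eq_rpow, ← Real.rpow_natCast,
    ← Real.rpow_mul zero_le_two, mul_one_div]

/-- the Frobenius norm of the converted tensor 𝒯 of a real symmetric
tensor Ψ satisfies ‖𝒯‖ = 2^{(m-1)/2} ‖Ψ‖ (here the order is m + 1). -/
theorem converted_tensor_norm {m n : ℕ} (hm : 1 ≤ m)
    (Ψ : (Fin (m + 1) → Fin n) → ℝ) (hΨ : SymmT Ψ)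
    (𝒯 : (Fin (m + 1) → Fin n ⊕ Fin n) → ℝ)
    (h𝒯 : ∀ g : Fin (m + 1) → Fin n ⊕ Fin n,
      𝒯 g =
        if Even ((Finset.univ.filter fun t => (g t).isRight = true).card) then
          (-1 : ℝ) ^ (((Finset.univ.filter fun t => (g t).isRight = true).card) / 2) *
            Ψ (fun t => Sum.elim id id (g t))
        else 0) :
    fnorm 𝒯 = (2 : ℝ) ^ ((m : ℝ) / 2) * fnorm Ψ :=
  converted_tensor_norm_general Ψ 𝒯 h𝒯
end
end
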